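/- (Cauchy–Schwarz step in the proof of Theorem 1.) Suppose the estimator g satisfies ∫ ‖g‖ f_m dμ < ∞ for every m = 0,…,P, ∫ ‖g − θ_0‖² f_0 dμ < ∞, and the pointwise C-unbiasedness conditions U_mᵀ W (∫ (g − θ_m) f_m dμ) = 0 for every m = 0,…,P. Then for every vector λ ∈ ℝ^{(P+1)(M−K)}, (∫ (g − θ_0)ᵀ W (g − θ_0) f_0 dμ) · (λᵀ D λ) ≥ (λᵀ t)². -/

import Mathlib

open MeasureTheory Matrix

/-!
Put `c_m = U_m λ_m`, `h = ∑_m (f_m / f_0) c_m` and `⟨u, v⟩ = ∫ f_0 uᵀ W v`, a positive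
semidefinite form since `W` is. Then `⟨h, h⟩ = ∑_{m,n} B_{m,n} c_mᵀ W c_n = λᵀ D λ`, and
`⟨h, g - θ_0⟩ = ∑_m ∫ f_m c_mᵀ W (g - θ_0)`. Since `∫ f_m = 1`, the `m`-th term is
`c_mᵀ W (∫ f_m (g - θ_m) + θ_m - θ_0)`, and C-unbiasedness kills the first summand because
`c_m` lies in the range of `U_m`; so `⟨h, g - θ_0⟩ = λᵀ t`. The claim is the Cauchy–Schwarz
inequality `⟨h, g - θ_0⟩² ≤ ⟨g - θ_0, g - θ_0⟩ ⟨h, h⟩`, which follows from the nonnegativity of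
the quadratic `r ↦ ⟨g - θ_0 - r h, g - θ_0 - r h⟩`.
-/

namespace Matrix

section Real

variable {ι : Type*} [Fintype ι]

theorem IsHermitian.dotProduct_mulVec_comm {W : Matrix ι ι ℝ} (hW : W.IsHermitian)
    (u v : ι → ℝ) : u ⬝ᵥ W *ᵥ v = v ⬝ᵥ W *ᵥ u := by
  rw [← dotProduct_transpose_mulVec, ← conjTranspose_eq_transpose_of_trivial, hW.eq]

theorem IsHermitian.sub_smul_dotProduct_mulVec_sub_smul {W : Matrix ι ι ℝ} (hW : W.IsHermitian)
    (u v : ι → ℝ) (r : ℝ) :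
    (u - r • v) ⬝ᵥ W *ᵥ (u - r • v)
      = u ⬝ᵥ W *ᵥ u - 2 * r * (v ⬝ᵥ W *ᵥ u) + r * r * (v ⬝ᵥ W *ᵥ v) := by
  simp only [mulVec_sub, mulVec_smul, sub_dotProduct, dotProduct_sub, smul_dotProduct,
    dotProduct_smul, smul_eq_mul, hW.dotProduct_mulVec_comm u v]
  ring

theorem abs_dotProduct_mulVec_le (A : Matrix ι ι ℝ) (u v : ι → ℝ) :
    |u ⬝ᵥ A *ᵥ v| ≤ (∑ i, ∑ j, |A i j|) * (‖u‖ * ‖v‖) := by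
  simp only [dotProduct, mulVec, Finset.mul_sum, Finset.sum_mul]
  refine (Finset.abs_sum_le_sum_abs _ _).trans (Finset.sum_le_sum fun i _ => ?_)
  refine (Finset.abs_sum_le_sum_abs _ _).trans (Finset.sum_le_sum fun j _ => ?_)
  rw [abs_mul, abs_mul, mul_left_comm]
  gcongr
  exacts [(norm_le_pi_norm u i :), (norm_le_pi_norm v j :)]

end Real

section Blockwise

variable {ι κ η R : Type*} [Fintype ι] [Fintype κ] [Fintype η] [CommSemiring R]

theorem mulVec_dotProduct_mulVec_mulVec (U V : Matrix ι η R) (W : Matrix ι ι R) (a b : η → R) :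
    U *ᵥ a ⬝ᵥ W *ᵥ (V *ᵥ b) = a ⬝ᵥ (Uᵀ * W * V) *ᵥ b := by
  rw [← mulVec_mulVec, ← mulVec_mulVec, dotProduct_mulVec a Uᵀ, vecMul_transpose]

theorem dotProduct_mulVec_blockwise (U : κ → Matrix ι η R) (W : Matrix ι ι R)
    (B : Matrix κ κ R) (D : Matrix (κ × η) (κ × η) R)
    (hD : ∀ m n i j, D (m, i) (n, j) = ((U m)ᵀ * W * U n) i j * B m n) (lam : κ × η → R) :
    lam ⬝ᵥ D *ᵥ lam
      = ∑ m, ∑ n, B m n * ((U m *ᵥ fun i => lam (m, i)) ⬝ᵥ W *ᵥ (U n *ᵥ fun j => lam (n, j))) := by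
  simp_rw [mulVec_dotProduct_mulVec_mulVec]
  simp only [dotProduct, mulVec, Fintype.sum_prod_type, Finset.mul_sum, hD]
  refine Finset.sum_congr rfl fun m _ => Finset.sum_comm.trans <| Finset.sum_congr rfl fun n _ =>
    Finset.sum_congr rfl fun i _ => Finset.sum_congr rfl fun j _ => by ring

theorem dotProduct_blockwise_transpose_mulVec (U : κ → Matrix ι η R) (y : κ → ι → R)
    (t : κ × η → R) (ht : ∀ m i, t (m, i) = ((U m)ᵀ *ᵥ y m) i) (lam : κ × η → R) :
    lam ⬝ᵥ t = ∑ m, (U m *ᵥ fun i => lam (m, i)) ⬝ᵥ y m := by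
  simp only [dotProduct, Fintype.sum_prod_type, ht]
  exact Finset.sum_congr rfl fun m _ =>
    (dotProduct_transpose_mulVec _ _ _).trans (dotProduct_comm _ _)

end Blockwise

section Field

variable {ι κ R : Type*} [Fintype ι] [Fintype κ] [Field R]

theorem mul_sum_div_smul_dotProduct_mulVec {s : R} (hs : s ≠ 0) (a : κ → R) (c : κ → ι → R)
    (W : Matrix ι ι R) (y : ι → R) :
    s * ((∑ m, (a m / s) • c m) ⬝ᵥ W *ᵥ y) = ∑ m, c m ⬝ᵥ W *ᵥ (a m • y) := by
  simp only [sum_dotProduct, smul_dotProduct, mulVec_smul, dotProduct_smul, smul_eq_mul,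
    Finset.mul_sum]
  exact Finset.sum_congr rfl fun m _ => by field_simp

theorem mul_sum_div_smul_dotProduct_mulVec_sum_div_smul {s : R} (hs : s ≠ 0) (a : κ → R)
    (c : κ → ι → R) (W : Matrix ι ι R) :
    s * ((∑ m, (a m / s) • c m) ⬝ᵥ W *ᵥ ∑ n, (a n / s) • c n)
      = ∑ m, ∑ n, a m * a n / s * (c m ⬝ᵥ W *ᵥ c n) := by
  simp only [sum_dotProduct, smul_dotProduct, mulVec_sum, dotProduct_sum, mulVec_smul,
    dotProduct_smul, smul_eq_mul, Finset.mul_sum]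
  rw [Finset.sum_comm]
  exact Finset.sum_congr rfl fun m _ => Finset.sum_congr rfl fun n _ => by field_simp
end Field

end Matrix

namespace MeasureTheory

variable {Ω ι : Type*} [MeasurableSpace Ω] {μ : Measure Ω} [Fintype ι]

theorem integral_dotProduct {F : Ω → ι → ℝ} (hF : Integrable F μ) (a : ι → ℝ) :
    ∫ x, a ⬝ᵥ F x ∂μ = a ⬝ᵥ ∫ x, F x ∂μ := by
  simp only [dotProduct]
  rw [integral_finsetSum _ fun i _ => (hF.eval i).const_mul _]
  simp_rw [integral_const_mul, eval_integral hF.eval]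

theorem integral_dotProduct_mulVec {F : Ω → ι → ℝ} (hF : Integrable F μ) (a : ι → ℝ)
    (A : Matrix ι ι ℝ) : ∫ x, a ⬝ᵥ A *ᵥ F x ∂μ = a ⬝ᵥ A *ᵥ ∫ x, F x ∂μ := by
  simp_rw [dotProduct_mulVec a A]
  exact integral_dotProduct hF _

theorem Integrable.dotProduct {F : Ω → ι → ℝ} (hF : Integrable F μ) (a : ι → ℝ) :
    Integrable (fun x => a ⬝ᵥ F x) μ :=
  integrable_finsetSum _ fun i _ => (hF.eval i).const_mul _

theorem Integrable.dotProduct_mulVec {F : Ω → ι → ℝ} (hF : Integrable F μ) (a : ι → ℝ)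
    (A : Matrix ι ι ℝ) : Integrable (fun x => a ⬝ᵥ A *ᵥ F x) μ := by
  simpa only [Matrix.dotProduct_mulVec a A] using hF.dotProduct (a ᵥ* A)

theorem Integrable.mul_dotProduct_mulVec_self {w : Ω → ℝ} {u : Ω → ι → ℝ}
    (hint : Integrable (fun x => ‖u x‖ ^ 2 * w x) μ) (hw : AEStronglyMeasurable w μ)
    (hw_nonneg : 0 ≤ᵐ[μ] w) (hu : AEStronglyMeasurable u μ) (A : Matrix ι ι ℝ) :
    Integrable (fun x => w x * (u x ⬝ᵥ A *ᵥ u x)) μ := by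
  have hquad : Continuous fun v : ι → ℝ => v ⬝ᵥ A *ᵥ v :=
    continuous_id.dotProduct (continuous_const.matrix_mulVec continuous_id)
  refine (hint.const_mul (∑ i, ∑ j, |A i j|)).mono' (hw.mul (hquad.comp_aestronglyMeasurable hu))
    ?_
  filter_upwards [hw_nonneg] with x hx
  rw [norm_mul, Real.norm_of_nonneg hx, Real.norm_eq_abs, pow_two]
  nlinarith [mul_le_mul_of_nonneg_left (abs_dotProduct_mulVec_le A (u x) (u x)) hx]

section Banach

variable {E : Type*} [NormedAddCommGroup E] [NormedSpace ℝ E]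

theorem Integrable.smul_sub_const {f : Ω → ℝ} (hf : Integrable f μ) (hf_nonneg : 0 ≤ f)
    {g : Ω → E} (hg : AEStronglyMeasurable g μ) (hfg : Integrable (fun x => ‖g x‖ * f x) μ)
    (a : E) : Integrable (fun x => f x • (g x - a)) μ := by
  have hfg' : Integrable (fun x => f x • g x) μ := by
    refine (integrable_norm_iff (hf.1.smul hg)).mp (hfg.congr (.of_forall fun x => ?_))
    simp only [Pi.smul_apply', norm_smul, Real.norm_of_nonneg (hf_nonneg x), mul_comm]
  exact (hfg'.sub (hf.smul_const a)).congr (.of_forall fun x => (_root_.smul_sub _ _ _).symm)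

theorem integral_smul_sub_eq_add [CompleteSpace E] {f : Ω → ℝ} (hf : Integrable f μ)
    (hf_one : ∫ x, f x ∂μ = 1) {g : Ω → E} {a : E}
    (hfg : Integrable (fun x => f x • (g x - a)) μ) (b : E) :
    ∫ x, f x • (g x - b) ∂μ = ∫ x, f x • (g x - a) ∂μ + (a - b) := by
  have hsplit : (fun x => f x • (g x - b)) = fun x => f x • (g x - a) + f x • (a - b) := by
    funext x; rw [← smul_add, sub_add_sub_cancel]
  rw [hsplit, integral_add hfg (hf.smul_const _), integral_smul_const, hf_one, one_smul]

end Banach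

theorem sq_integral_mul_dotProduct_mulVec_le {W : Matrix ι ι ℝ} (hW : W.PosSemidef)
    {w : Ω → ℝ} (hw : 0 ≤ᵐ[μ] w) {u v : Ω → ι → ℝ}
    (huu : Integrable (fun x => w x * (u x ⬝ᵥ W *ᵥ u x)) μ)
    (hvu : Integrable (fun x => w x * (v x ⬝ᵥ W *ᵥ u x)) μ)
    (hvv : Integrable (fun x => w x * (v x ⬝ᵥ W *ᵥ v x)) μ) :
    (∫ x, w x * (v x ⬝ᵥ W *ᵥ u x) ∂μ) ^ 2
      ≤ (∫ x, w x * (u x ⬝ᵥ W *ᵥ u x) ∂μ) * ∫ x, w x * (v x ⬝ᵥ W *ᵥ v x) ∂μ := by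
  set a := ∫ x, w x * (u x ⬝ᵥ W *ᵥ u x) ∂μ
  set b := ∫ x, w x * (v x ⬝ᵥ W *ᵥ u x) ∂μ
  set c := ∫ x, w x * (v x ⬝ᵥ W *ᵥ v x) ∂μ
  have hquadratic : ∀ r : ℝ, 0 ≤ c * (r * r) + -2 * b * r + a := by
    intro r
    have hexpand : c * (r * r) + -2 * b * r + a
        = ∫ x, w x * ((u x - r • v x) ⬝ᵥ W *ᵥ (u x - r • v x)) ∂μ := by
      simp_rw [hW.isHermitian.sub_smul_dotProduct_mulVec_sub_smul, mul_add, mul_sub,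
        mul_left_comm (w _) (_ * _)]
      rw [integral_add _ (hvv.const_mul _), integral_sub huu (hvu.const_mul _),
        integral_const_mul, integral_const_mul]
      · ring
      · exact huu.sub (hvu.const_mul _)
    rw [hexpand]
    refine integral_nonneg_of_ae ?_
    filter_upwards [hw] with x hx
    exact mul_nonneg hx (hW.dotProduct_mulVec_nonneg _)
  have hdiscrim := discrim_le_zero hquadratic
  rw [discrim] at hdiscrim
  nlinarith

theorem integral_mulVec_dotProduct_mulVec_smul_sub {η : Type*} [Fintype η] {f : Ω → ℝ}
    (hf : Integrable f μ) (hf_one : ∫ x, f x ∂μ = 1) {g : Ω → ι → ℝ} {a b : ι → ℝ}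
    (hfga : Integrable (fun x => f x • (g x - a)) μ)
    (hfgb : Integrable (fun x => f x • (g x - b)) μ) (W : Matrix ι ι ℝ) (U : Matrix ι η ℝ)
    (hbias : Uᵀ *ᵥ W *ᵥ ∫ x, f x • (g x - a) ∂μ = 0) (v : η → ℝ) :
    ∫ x, U *ᵥ v ⬝ᵥ W *ᵥ (f x • (g x - b)) ∂μ = U *ᵥ v ⬝ᵥ W *ᵥ (a - b) := by
  have hbias' : U *ᵥ v ⬝ᵥ W *ᵥ ∫ x, f x • (g x - a) ∂μ = 0 := by
    rw [dotProduct_comm, ← dotProduct_transpose_mulVec, hbias, dotProduct_zero]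
  rw [integral_dotProduct_mulVec hfgb, integral_smul_sub_eq_add hf hf_one hfga, mulVec_add,
    dotProduct_add, hbias', zero_add]

end MeasureTheory

theorem lu_cbtb_cauchy_schwarz_step_general
    {Ω : Type*} [MeasurableSpace Ω] (μ : Measure Ω)
    (M K P : ℕ)
    (f : Fin (P + 1) → Ω → ℝ)
    (hf_nonneg : ∀ m x, 0 ≤ f m x)
    (hf_int : ∀ m, Integrable (f m) μ)
    (hf_one : ∀ m, ∫ x, f m x ∂μ = 1)
    (hf0_pos : ∀ᵐ x ∂μ, 0 < f 0 x)
    (B : Matrix (Fin (P + 1)) (Fin (P + 1)) ℝ)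
    (hB : ∀ m n, B m n = ∫ x, f m x * f n x / f 0 x ∂μ)
    (hB_fin : ∀ m n, Integrable (fun x => f m x * f n x / f 0 x) μ)
    (θ : Fin (P + 1) → Fin M → ℝ)
    (W : Matrix (Fin M) (Fin M) ℝ) (hW : W.PosSemidef)
    (U : Fin (P + 1) → Matrix (Fin M) (Fin (M - K)) ℝ)
    (D : Matrix (Fin (P + 1) × Fin (M - K)) (Fin (P + 1) × Fin (M - K)) ℝ)
    (hD : ∀ m n i j, D (m, i) (n, j) = ((U m)ᵀ * W * U n) i j * B m n)
    (t : Fin (P + 1) × Fin (M - K) → ℝ)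
    (ht : ∀ m i, t (m, i) = (U m)ᵀ.mulVec (W.mulVec (fun k => θ m k - θ 0 k)) i)
    (g : Ω → Fin M → ℝ) (hg_meas : Measurable g)
    (hg_int1 : ∀ m, Integrable (fun x => ‖g x‖ * f m x) μ)
    (hg_int2 : Integrable (fun x => ‖g x - θ 0‖ ^ 2 * f 0 x) μ)
    (hg_cunbiased : ∀ m, (U m)ᵀ.mulVec (W.mulVec (∫ x, f m x • (g x - θ m) ∂μ)) = 0) :
    ∀ lam : Fin (P + 1) × Fin (M - K) → ℝ,
      (∫ x, f 0 x * ((g x - θ 0) ⬝ᵥ W.mulVec (g x - θ 0)) ∂μ) * (lam ⬝ᵥ D.mulVec lam)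
        ≥ (lam ⬝ᵥ t) ^ 2 := by
  intro lam
  set c : Fin (P + 1) → Fin M → ℝ := fun m => U m *ᵥ fun i => lam (m, i)
  set h : Ω → Fin M → ℝ := fun x => ∑ m, (f m x / f 0 x) • c m
  have hfg m := (hf_int m).smul_sub_const (hf_nonneg m) hg_meas.aestronglyMeasurable (hg_int1 m)
  have hcross : (fun x => f 0 x * (h x ⬝ᵥ W *ᵥ (g x - θ 0)))
      =ᵐ[μ] fun x => ∑ m, c m ⬝ᵥ W *ᵥ (f m x • (g x - θ 0)) := by
    filter_upwards [hf0_pos] with x hx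
    exact mul_sum_div_smul_dotProduct_mulVec hx.ne' _ c W _
  have hquad : (fun x => f 0 x * (h x ⬝ᵥ W *ᵥ h x))
      =ᵐ[μ] fun x => ∑ m, ∑ n, f m x * f n x / f 0 x * (c m ⬝ᵥ W *ᵥ c n) := by
    filter_upwards [hf0_pos] with x hx
    exact mul_sum_div_smul_dotProduct_mulVec_sum_div_smul hx.ne' _ c W
  have hcross_eq : ∫ x, ∑ m, c m ⬝ᵥ W *ᵥ (f m x • (g x - θ 0)) ∂μ = lam ⬝ᵥ t := by
    rw [dotProduct_blockwise_transpose_mulVec U (fun m => W *ᵥ (θ m - θ 0)) t ht lam,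
      integral_finsetSum _ fun m _ => (hfg m _).dotProduct_mulVec _ _]
    exact Finset.sum_congr rfl fun m _ => integral_mulVec_dotProduct_mulVec_smul_sub (hf_int m)
      (hf_one m) (hfg m (θ m)) (hfg m (θ 0)) W (U m) (hg_cunbiased m) _
  have hquad_eq : ∫ x, ∑ m, ∑ n, f m x * f n x / f 0 x * (c m ⬝ᵥ W *ᵥ c n) ∂μ
      = lam ⬝ᵥ D *ᵥ lam := by
    rw [dotProduct_mulVec_blockwise U W B D hD, integral_finsetSum _ fun m _ =>
      integrable_finsetSum _ fun n _ => (hB_fin m n).mul_const _]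
    refine Finset.sum_congr rfl fun m _ => ?_
    rw [integral_finsetSum _ fun n _ => (hB_fin m n).mul_const _]
    simp_rw [integral_mul_const, hB]
    rfl
  have huu := hg_int2.mul_dotProduct_mulVec_self (hf_int 0).aestronglyMeasurable
    (ae_of_all _ (hf_nonneg 0)) (hg_meas.sub measurable_const).aestronglyMeasurable W
  have hvu := (integrable_finsetSum _ fun m _ => (hfg m (θ 0)).dotProduct_mulVec (c m) W).congr
    hcross.symm
  have hvv := (integrable_finsetSum _ fun m _ => integrable_finsetSum _ fun n _ =>
    (hB_fin m n).mul_const (c m ⬝ᵥ W *ᵥ c n)).congr hquad.symm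
  have hCS := sq_integral_mul_dotProduct_mulVec_le hW (ae_of_all _ (hf_nonneg 0)) huu hvu hvv
  rwa [integral_congr_ae hcross, hcross_eq, integral_congr_ae hquad, hquad_eq] at hCS

/-- **Cauchy–Schwarz step in the proof of Theorem 1.**
Under the integrability and pointwise C-unbiasedness assumptions on the estimator `g`,
for every vector `λ`, `(WMSE) · (λᵀ D λ) ≥ (λᵀ t)²`. -/
theorem lu_cbtb_cauchy_schwarz_step
    {Ω : Type*} [MeasurableSpace Ω] (μ : Measure Ω)
    (M K P : ℕ) (hK : 0 < K) (hKM : K < M) (hP : 1 ≤ P)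
    (f : Fin (P + 1) → Ω → ℝ)
    (hf_meas : ∀ m, Measurable (f m))
    (hf_nonneg : ∀ m x, 0 ≤ f m x)
    (hf_int : ∀ m, Integrable (f m) μ)
    (hf_one : ∀ m, ∫ x, f m x ∂μ = 1)
    (hf0_pos : ∀ᵐ x ∂μ, 0 < f 0 x)
    (B : Matrix (Fin (P + 1)) (Fin (P + 1)) ℝ)
    (hB : ∀ m n, B m n = ∫ x, f m x * f n x / f 0 x ∂μ)
    (hB_fin : ∀ m n, Integrable (fun x => f m x * f n x / f 0 x) μ)
    (θ : Fin (P + 1) → Fin M → ℝ)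
    (W : Matrix (Fin M) (Fin M) ℝ) (hW : W.PosSemidef)
    (U : Fin (P + 1) → Matrix (Fin M) (Fin (M - K)) ℝ)
    (D : Matrix (Fin (P + 1) × Fin (M - K)) (Fin (P + 1) × Fin (M - K)) ℝ)
    (hD : ∀ m n i j, D (m, i) (n, j) = ((U m)ᵀ * W * U n) i j * B m n)
    (t : Fin (P + 1) × Fin (M - K) → ℝ)
    (ht : ∀ m i, t (m, i) = (U m)ᵀ.mulVec (W.mulVec (fun k => θ m k - θ 0 k)) i)
    (g : Ω → Fin M → ℝ) (hg_meas : Measurable g)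
    (hg_int1 : ∀ m, Integrable (fun x => ‖g x‖ * f m x) μ)
    (hg_int2 : Integrable (fun x => ‖g x - θ 0‖ ^ 2 * f 0 x) μ)
    (hg_cunbiased : ∀ m, (U m)ᵀ.mulVec (W.mulVec (∫ x, f m x • (g x - θ m) ∂μ)) = 0) :
    ∀ lam : Fin (P + 1) × Fin (M - K) → ℝ,
      (∫ x, f 0 x * ((g x - θ 0) ⬝ᵥ W.mulVec (g x - θ 0)) ∂μ) * (lam ⬝ᵥ D.mulVec lam)
        ≥ (lam ⬝ᵥ t) ^ 2 :=
  lu_cbtb_cauchy_schwarz_step_general μ M K P f hf_nonneg hf_int hf_one hf0_pos B hB hB_fin θ W hW U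
    D hD t ht g hg_meas hg_int1 hg_int2 hg_cunbiased
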